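/- arXiv:1808.01046 — 7 statements merged into one kernel-verified Lean document; each statement's English description precedes it below -/
import Mathlib

section
/- Let I ⊆ ℚ[x_1,...,x_n] be an ideal. If I contains every element of E_{i,j}^n (elementary symmetric polynomials of degree i in all j-element subsets of the variables), then I contains every element of E_{i,j+k}^n for all k with 1 ≤ k ≤ n − j. -/
/-!
Double counting: summing `e_i(U)` over the `j`-element subsets `U ⊆ S` counts each `i`-element
monomial of `e_i(S)` once for every `U` containing it, i.e. `C(|S| - i, j - i)` times. So
`C(|S| - i, j - i) • e_i(S)` lies in the ideal, and this binomial coefficient is nonzero,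
hence a unit in `ℚ`.
-/

open MvPolynomial Finset

/-- The elementary symmetric polynomial `e_i(S)` in the set of variables `S ⊆ {x_1,...,x_n}`. -/
noncomputable def esymS (S : Finset ℕ) (i : ℕ) : MvPolynomial ℕ ℚ :=
  ∑ T ∈ S.powersetCard i, ∏ j ∈ T, X j

theorem Finset.sum_powersetCard_sum_powersetCard {α M : Type*} [DecidableEq α] [AddCommMonoid M]
    (S : Finset α) {i j : ℕ} (hij : i ≤ j) (f : Finset α → M) :
    ∑ U ∈ S.powersetCard j, ∑ T ∈ U.powersetCard i, f T
      = (#S - i).choose (j - i) • ∑ T ∈ S.powersetCard i, f T := by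
  have powersetCard_eq_filter_subset : ∀ U ∈ S.powersetCard j,
      U.powersetCard i = (S.powersetCard i).filter (· ⊆ U) := by
    intro U hU
    ext T
    simp only [mem_powersetCard, mem_filter] at hU ⊢
    exact ⟨fun ⟨hTU, hT⟩ => ⟨⟨hTU.trans hU.1, hT⟩, hTU⟩, fun ⟨⟨_, hT⟩, hTU⟩ => ⟨hTU, hT⟩⟩
  rw [sum_congr rfl fun U hU => by rw [powersetCard_eq_filter_subset U hU, sum_filter],
    sum_comm, smul_sum]
  refine sum_congr rfl fun T hT => ?_
  rw [mem_powersetCard] at hT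
  rw [← sum_filter, sum_const, card_filter_powersetCard_subset T S j hT.1 (hT.2 ▸ hij), hT.2]

theorem sum_esymS_powersetCard (S : Finset ℕ) {i j : ℕ} (hij : i ≤ j) :
    ∑ U ∈ S.powersetCard j, esymS U i = (#S - i).choose (j - i) • esymS S i :=
  S.sum_powersetCard_sum_powersetCard hij _

theorem Ideal.mem_of_nsmul_mem {A : Type*} [CommRing A] [Algebra ℚ A] (I : Ideal A) {m : ℕ}
    (hm : m ≠ 0) {x : A} (hx : m • x ∈ I) : x ∈ I := by
  have hunit : IsUnit (m : A) := by
    simpa using (Nat.cast_ne_zero.mpr hm : (m : ℚ) ≠ 0).isUnit.map (algebraMap ℚ A)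
  rwa [nsmul_eq_mul, I.unit_mul_mem_iff_mem hunit] at hx

theorem stmt2_general (n i j : ℕ) (hij : i ≤ j)
    (I : Ideal (MvPolynomial ℕ ℚ))
    (hI : ∀ S : Finset ℕ, S ⊆ Finset.Icc 1 n → S.card = j → esymS S i ∈ I) :
    ∀ k : ℕ, 1 ≤ k → k ≤ n - j →
      ∀ S : Finset ℕ, S ⊆ Finset.Icc 1 n → S.card = j + k → esymS S i ∈ I := by
  intro k _ _ S hS hcard
  have hsum : ∑ U ∈ S.powersetCard j, esymS U i ∈ I :=
    I.sum_mem fun U hU => hI U ((mem_powersetCard.1 hU).1.trans hS) (mem_powersetCard.1 hU).2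
  rw [sum_esymS_powersetCard S hij] at hsum
  exact I.mem_of_nsmul_mem (Nat.choose_pos (by omega)).ne' hsum

/-- If an ideal `I ⊆ ℚ[x_1,...,x_n]` contains every element of `E_{i,j}^n`, then it contains
every element of `E_{i,j+k}^n` for all `1 ≤ k ≤ n - j`. -/
theorem stmt2 (n i j : ℕ) (hij : i ≤ j) (hjn : j ≤ n)
    (I : Ideal (MvPolynomial ℕ ℚ))
    (hI : ∀ S : Finset ℕ, S ⊆ Finset.Icc 1 n → S.card = j → esymS S i ∈ I) :
    ∀ k : ℕ, 1 ≤ k → k ≤ n - j →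
      ∀ S : Finset ℕ, S ⊆ Finset.Icc 1 n → S.card = j + k → esymS S i ∈ I :=
  stmt2_general n i j hij I hI
end

section
/- Let λ and λ' be partitions of n with λ ⊴ λ' in dominance order (λ_1 + ⋯ + λ_i ≤ λ'_1 + ⋯ + λ'_i for all i). Then the Garsia-Procesi basis satisfies B(λ') ⊆ B(λ). -/
/-!
Induction on `n`. Read a partition as the antitone sequence `s ↦ λ_s` of its row lengths.
Removing the box of row `i` and re-sorting lowers the *last* row `j` of length `λ_i`, so the
prefix sums drop by one from index `j + 1` on. If `λ ⊴ λ'`, lowering row `i` in both therefore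
keeps dominance, except possibly at indices `t` with `k < t ≤ j`, where `k` is the last row of
`λ'` of length `λ'_i`. There dominance is already strict: equality at `t` and dominance at
`t + 1` give `λ_i = λ_t ≤ λ'_t < λ'_i`, so rows `i, …, t - 1` of `λ'` outweigh those of `λ`.
Finally `λ'` has at most as many rows as `λ`, so every term `x_n^i B(λ'_i)` of `B(λ')` is
contained in the term `x_n^i B(λ_i)` of `B(λ)`.
-/

open MvPolynomial

/-- Delete the rightmost box of (0-indexed) row `i` of `l`, drop empty rows, and re-sort
into weakly decreasing order. -/
def gpStep (l : List ℕ) (i : ℕ) : List ℕ :=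
  ((l.set i (l.getD i 0 - 1)).filter (fun x => x ≠ 0)).insertionSort (· ≥ ·)

/-- Auxiliary recursion for the Garsia-Procesi basis, with fuel equal to the number of boxes. -/
noncomputable def gpAux : ℕ → List ℕ → Set (MvPolynomial ℕ ℚ)
  | 0, _ => {1}
  | (n + 1), l => ⋃ i ∈ Finset.range l.length,
      (fun p => (X (n + 1) : MvPolynomial ℕ ℚ) ^ i * p) '' gpAux n (gpStep l i)

/-- The Garsia-Procesi basis `B(λ)`: `B((1)) = {1}` and
`B(λ) = ⋃_{i=1}^k x_n^{i-1} B(λ_i)` where `λ_i` is `λ` with the rightmost box of row `i`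
removed and rows re-sorted. -/
noncomputable def gpBasis (l : List ℕ) : Set (MvPolynomial ℕ ℚ) := gpAux l.sum l

/-- `l` is a partition of `n`: weakly decreasing, positive parts, total `n`. -/
def IsPartitionOf (n : ℕ) (l : List ℕ) : Prop :=
  l.Pairwise (· ≥ ·) ∧ (∀ x ∈ l, 0 < x) ∧ l.sum = n

open Finset

def IsPlateauEnd (f : ℕ → ℕ) (i j : ℕ) : Prop :=
  i ≤ j ∧ f j = f i ∧ f (j + 1) < f i

lemma IsPlateauEnd.apply_succ_lt {f : ℕ → ℕ} {i j : ℕ} (h : IsPlateauEnd f i j) :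
    f (j + 1) < f j :=
  h.2.1 ▸ h.2.2

lemma IsPlateauEnd.pos {f : ℕ → ℕ} {i j : ℕ} (h : IsPlateauEnd f i j) : 0 < f j :=
  (Nat.zero_le _).trans_lt h.apply_succ_lt

section PrefixSums

variable {f g : ℕ → ℕ}

lemma exists_isPlateauEnd_of_antitone (hf : Antitone f) {i m : ℕ} (hm : f m < f i) :
    ∃ j, IsPlateauEnd f i j := by
  classical
  have hex : ∃ d, f (i + d + 1) < f i := ⟨m, lt_of_le_of_lt (hf (by omega)) hm⟩
  refine ⟨i + Nat.find hex, by omega, ?_, Nat.find_spec hex⟩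
  rcases h : Nat.find hex with _ | d
  · rfl
  · have := Nat.find_min hex (show d < Nat.find hex by omega)
    exact le_antisymm (hf (by omega)) (by simpa [add_assoc] using this)

lemma sum_range_update_pred_add {j : ℕ} (hf : 0 < f j) (t : ℕ) :
    ∑ s ∈ range t, Function.update f j (f j - 1) s + (if j < t then 1 else 0) =
      ∑ s ∈ range t, f s := by
  by_cases hjt : j < t
  · have hj : j ∈ range t := mem_range.2 hjt
    rw [sum_update_of_mem hj, if_pos hjt, ← add_sum_erase _ _ hj, sdiff_singleton_eq_erase]
    omega
  · rw [sum_update_of_notMem (by simpa using hjt), if_neg hjt, add_zero]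

variable (hf : Antitone f) (hg : Antitone g)
  (hdom : ∀ t, ∑ s ∈ range t, f s ≤ ∑ s ∈ range t, g s)
include hf hg hdom

lemma sum_range_lt_of_isPlateauEnd {i j k t : ℕ} (hF : IsPlateauEnd f i j)
    (hG : IsPlateauEnd g i k) (hkt : k < t) (htj : t ≤ j) :
    ∑ s ∈ range t, f s < ∑ s ∈ range t, g s := by
  obtain ⟨hik, -, hgk⟩ := hG
  have hplateau : ∀ s, i ≤ s → s ≤ j → f s = f i := fun s his hsj =>
    le_antisymm (hf his) (hF.2.1 ▸ hf hsj)
  by_contra hcon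
  have hfi_le : f i ≤ g t := by
    have h := hdom (t + 1)
    rw [sum_range_succ, sum_range_succ, hplateau t (by omega) htj] at h
    omega
  have hIco : ∑ s ∈ Ico i t, f s < ∑ s ∈ Ico i t, g s := by
    refine sum_lt_sum (fun s hs => ?_) ⟨i, by simp; omega, ?_⟩
    · rw [mem_Ico] at hs
      rw [hplateau s hs.1 (by omega)]
      exact hfi_le.trans (hg hs.2.le)
    · exact lt_of_le_of_lt (hfi_le.trans (hg (by omega))) hgk
  have := hdom i
  rw [← sum_range_add_sum_Ico f (by omega : i ≤ t), ← sum_range_add_sum_Ico g (by omega : i ≤ t)]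
    at hcon
  omega

theorem sum_range_update_pred_le {i j k : ℕ} (hF : IsPlateauEnd f i j)
    (hG : IsPlateauEnd g i k) (t : ℕ) :
    ∑ s ∈ range t, Function.update f j (f j - 1) s ≤
      ∑ s ∈ range t, Function.update g k (g k - 1) s := by
  have hF' := sum_range_update_pred_add (f := f) hF.pos t
  have hG' := sum_range_update_pred_add (f := g) hG.pos t
  have := hdom t
  by_cases hkt : k < t <;> by_cases hjt : j < t <;>
    simp only [hkt, hjt, if_true, if_false] at hF' hG'
  · omega
  · have := sum_range_lt_of_isPlateauEnd hf hg hdom hF hG hkt (by omega)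
    omega
  · omega
  · omega

end PrefixSums

namespace List

variable {l : List ℕ}

lemma antitone_getD_of_pairwise_ge (hl : l.Pairwise (· ≥ ·)) : Antitone (l.getD · 0) := by
  intro i j hij
  rcases lt_or_ge j l.length with hj | hj
  · show l.getD j 0 ≤ l.getD i 0
    rw [getD_eq_getElem l 0 hj, getD_eq_getElem l 0 (by omega)]
    rcases hij.eq_or_lt with rfl | hlt
    · rfl
    · exact pairwise_iff_getElem.mp hl i j (by omega) hj hlt
  · exact (getD_eq_default l 0 hj).trans_le (Nat.zero_le _)

lemma sum_take_eq_sum_range_getD (l : List ℕ) (t : ℕ) :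
    (l.take t).sum = ∑ s ∈ Finset.range t, l.getD s 0 := by
  induction t with
  | zero => simp
  | succ t ih =>
    rw [take_add_one, sum_append, ih, Finset.sum_range_succ, getD_eq_getElem?_getD]
    cases l[t]? <;> simp

lemma getD_filter_ne_zero (hl : l.Pairwise (· ≥ ·)) (s : ℕ) :
    (l.filter (· ≠ 0)).getD s 0 = l.getD s 0 := by
  induction l generalizing s with
  | nil => simp
  | cons x xs ih =>
    have hanti := antitone_getD_of_pairwise_ge hl
    rw [pairwise_cons] at hl
    rcases eq_or_ne x 0 with rfl | hx
    · rw [filter_eq_nil_iff.2 (by simpa using hl.1), getD_nil]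
      exact (Nat.le_zero.1 (hanti (Nat.zero_le s))).symm
    · rw [filter_cons_of_pos (by simpa using hx)]
      cases s
      · rfl
      · exact ih hl.2 _

lemma getD_set_eq_update {j : ℕ} (hj : j < l.length) (v s : ℕ) :
    (l.set j v).getD s 0 = Function.update (l.getD · 0) j v s := by
  rw [getD_eq_getElem?_getD, getElem?_set]
  rcases eq_or_ne j s with rfl | hjs
  · simp [hj]
  · simp [hjs, Ne.symm hjs, getD_eq_getElem?_getD]

lemma perm_set_set_of_getD_eq {i j : ℕ} (hi : i < l.length) (hj : j < l.length)
    (h : l.getD i 0 = l.getD j 0) (v : ℕ) : (l.set i v).Perm (l.set j v) := by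
  rw [getD_eq_getElem l 0 hi, getD_eq_getElem l 0 hj] at h
  rw [perm_iff_count]
  intro x
  rw [count_set hi, count_set hj, h]

lemma pairwise_ge_set (hl : l.Pairwise (· ≥ ·)) {j v : ℕ}
    (hub : v ≤ l.getD j 0) (hlb : l.getD (j + 1) 0 ≤ v) : (l.set j v).Pairwise (· ≥ ·) := by
  have hanti := antitone_getD_of_pairwise_ge hl
  rw [pairwise_iff_getElem]
  intro p q hp hq hpq
  rw [length_set] at hp hq
  rw [getElem_set, getElem_set]
  have hp' := getD_eq_getElem l 0 hp
  have hq' := getD_eq_getElem l 0 hq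
  split_ifs with hjp hjq hjq
  · omega
  · have : l.getD q 0 ≤ l.getD (j + 1) 0 := hanti (by omega)
    omega
  · have : l.getD j 0 ≤ l.getD p 0 := hanti (by omega)
    omega
  · exact pairwise_iff_getElem.mp hl p q hp hq hpq

end List

section GpStep

variable {l l' : List ℕ} {i j : ℕ}

lemma exists_isPlateauEnd_getD (hl : l.Pairwise (· ≥ ·)) (hpos : ∀ x ∈ l, 0 < x)
    (hi : i < l.length) : ∃ j, IsPlateauEnd (l.getD · 0) i j := by
  refine exists_isPlateauEnd_of_antitone (List.antitone_getD_of_pairwise_ge hl) (m := l.length) ?_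
  rw [List.getD_eq_default l 0 le_rfl, List.getD_eq_getElem l 0 hi]
  exact hpos _ (List.getElem_mem hi)

lemma IsPlateauEnd.lt_length (h : IsPlateauEnd (l.getD · 0) i j) : j < l.length := by
  by_contra hj
  obtain ⟨-, hji, hlt⟩ := h
  simp only [List.getD_eq_default l 0 (not_lt.1 hj),
    List.getD_eq_default l 0 (show l.length ≤ j + 1 by omega)] at hji hlt
  omega

lemma pairwise_ge_set_pred_of_isPlateauEnd (hl : l.Pairwise (· ≥ ·))
    (h : IsPlateauEnd (l.getD · 0) i j) : (l.set j (l.getD j 0 - 1)).Pairwise (· ≥ ·) :=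
  List.pairwise_ge_set hl (Nat.sub_le _ _) (Nat.le_sub_one_of_lt h.apply_succ_lt)

-- Rows `i` and `j` have the same length, so lowering either gives the same multiset, and
-- lowering row `j` keeps the list sorted.
lemma gpStep_eq_filter_set (hl : l.Pairwise (· ≥ ·)) (h : IsPlateauEnd (l.getD · 0) i j) :
    gpStep l i = (l.set j (l.getD j 0 - 1)).filter (· ≠ 0) := by
  have hj := h.lt_length
  have hji : l.getD j 0 = l.getD i 0 := h.2.1
  refine List.Perm.eq_of_pairwise' (List.pairwise_insertionSort _ _) ?_ ?_
  · exact (pairwise_ge_set_pred_of_isPlateauEnd hl h).filter _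
  · rw [hji]
    exact (List.perm_insertionSort _ _).trans
      ((List.perm_set_set_of_getD_eq (h.1.trans_lt hj) hj hji.symm _).filter _)

lemma getD_gpStep (hl : l.Pairwise (· ≥ ·)) (h : IsPlateauEnd (l.getD · 0) i j) (s : ℕ) :
    (gpStep l i).getD s 0 = Function.update (l.getD · 0) j (l.getD j 0 - 1) s := by
  rw [gpStep_eq_filter_set hl h, List.getD_filter_ne_zero, List.getD_set_eq_update h.lt_length]
  exact pairwise_ge_set_pred_of_isPlateauEnd hl h

lemma sum_take_gpStep_add (hl : l.Pairwise (· ≥ ·)) (h : IsPlateauEnd (l.getD · 0) i j)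
    (t : ℕ) : ((gpStep l i).take t).sum + (if j < t then 1 else 0) = (l.take t).sum := by
  rw [List.sum_take_eq_sum_range_getD, List.sum_take_eq_sum_range_getD,
    Finset.sum_congr rfl (fun s _ => getD_gpStep hl h s)]
  exact sum_range_update_pred_add (f := (l.getD · 0)) h.pos t

lemma sum_gpStep_add_one (hl : l.Pairwise (· ≥ ·)) (h : IsPlateauEnd (l.getD · 0) i j) :
    (gpStep l i).sum + 1 = l.sum := by
  have hlen : (gpStep l i).length ≤ l.length := by
    rw [gpStep_eq_filter_set hl h]
    exact (List.length_filter_le _ _).trans (List.length_set ..).le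
  have := sum_take_gpStep_add hl h l.length
  rwa [if_pos h.lt_length, List.take_of_length_le hlen, List.take_of_length_le le_rfl] at this

lemma pos_of_mem_gpStep {x : ℕ} (hx : x ∈ gpStep l i) : 0 < x := by
  rw [gpStep, (List.perm_insertionSort _ _).mem_iff, List.mem_filter] at hx
  simpa [Nat.pos_iff_ne_zero] using hx.2

lemma isPartitionOf_gpStep {n : ℕ} (hl : IsPartitionOf (n + 1) l) (hi : i < l.length) :
    IsPartitionOf n (gpStep l i) := by
  obtain ⟨j, hj⟩ := exists_isPlateauEnd_getD hl.1 hl.2.1 hi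
  have := sum_gpStep_add_one hl.1 hj
  exact ⟨List.pairwise_insertionSort _ _, fun _ => pos_of_mem_gpStep, by have := hl.2.2; omega⟩

lemma gpStep_dominates (hl : l.Pairwise (· ≥ ·)) (hl' : l'.Pairwise (· ≥ ·))
    (hdom : ∀ t, (l.take t).sum ≤ (l'.take t).sum) (hj : IsPlateauEnd (l.getD · 0) i j)
    {k : ℕ} (hk : IsPlateauEnd (l'.getD · 0) i k) (t : ℕ) :
    ((gpStep l i).take t).sum ≤ ((gpStep l' i).take t).sum := by
  simp only [List.sum_take_eq_sum_range_getD] at hdom ⊢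
  rw [Finset.sum_congr rfl (fun s _ => getD_gpStep hl hj s),
    Finset.sum_congr rfl (fun s _ => getD_gpStep hl' hk s)]
  exact sum_range_update_pred_le (List.antitone_getD_of_pairwise_ge hl)
    (List.antitone_getD_of_pairwise_ge hl') hdom hj hk t

end GpStep

lemma length_le_of_dominates {l l' : List ℕ} (hpos' : ∀ x ∈ l', 0 < x) (hsum : l'.sum ≤ l.sum)
    (hdom : ∀ t, (l.take t).sum ≤ (l'.take t).sum) : l'.length ≤ l.length := by
  by_contra! hlt
  have hle := hdom l.length
  rw [List.take_of_length_le le_rfl] at hle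
  have hsucc := List.sum_take_succ l' l.length hlt
  have hrest := List.sum_take_add_sum_drop l' (l.length + 1)
  have := hpos' _ (List.getElem_mem hlt)
  omega

lemma gpAux_subset_of_dominates {n : ℕ} {l l' : List ℕ} (hl : IsPartitionOf n l)
    (hl' : IsPartitionOf n l') (hdom : ∀ t, (l.take t).sum ≤ (l'.take t).sum) :
    gpAux n l' ⊆ gpAux n l := by
  induction n generalizing l l' with
  | zero => simp [gpAux]
  | succ n ih =>
    intro x hx
    simp only [gpAux, Set.mem_iUnion, Set.mem_image, Finset.mem_range] at hx ⊢
    obtain ⟨i, hi', p, hp, rfl⟩ := hx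
    have hi : i < l.length :=
      lt_of_lt_of_le hi' (length_le_of_dominates hl'.2.1 (hl'.2.2.trans hl.2.2.symm).le hdom)
    obtain ⟨j, hj⟩ := exists_isPlateauEnd_getD hl.1 hl.2.1 hi
    obtain ⟨k, hk⟩ := exists_isPlateauEnd_getD hl'.1 hl'.2.1 hi'
    refine ⟨i, hi, p, ?_, rfl⟩
    exact ih (isPartitionOf_gpStep hl hi) (isPartitionOf_gpStep hl' hi')
      (gpStep_dominates hl.1 hl'.1 hdom hj hk) hp

/-- If `λ ⊴ λ'` in dominance order then `B(λ') ⊆ B(λ)`. -/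
theorem stmt6 (n : ℕ) (l l' : List ℕ)
    (hl : IsPartitionOf n l) (hl' : IsPartitionOf n l')
    (hdom : ∀ i : ℕ, (l.take i).sum ≤ (l'.take i).sum) :
    gpBasis l' ⊆ gpBasis l := by
  rw [gpBasis, gpBasis, hl.2.2, hl'.2.2]
  exact gpAux_subset_of_dominates hl hl' hdom
end

section
/- If λ ⊆ λ' are Young diagrams (λ a partition of m, λ' a partition of n, m ≤ n, with λ contained in λ' as diagrams), then B(λ) ⊆ B(λ'). -/
open MvPolynomial

/-!
Let `i` be the last row in which `λ'` is longer than `λ`. Row `i` ends in a corner of `λ'`, so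
deleting that box gives a partition `μ` of `n - 1` with `λ ⊆ μ`, and `B(λ) ⊆ B(μ)` by induction
on `n`. Among the partitions obtained from `λ'` by deleting one box, `λ'_1` (delete from the first
row) is the smallest in dominance order, and `B` is antitone for dominance on partitions of the
same size: by induction, because deleting a box in the same row `i` of `ν ⊴ τ` keeps `ν_i ⊴ τ_i`.
Hence `B(μ) ⊆ B(λ'_1) = x_n^0 B(λ'_1) ⊆ B(λ')`.
-/

open Finset

namespace GarsiaProcesi

section Rows

variable {l : List ℕ}

lemma lt_length_of_getD_pos {i : ℕ} (h : 0 < l.getD i 0) : i < l.length := by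
  by_contra hi
  rw [List.getD_eq_default _ _ (not_lt.mp hi)] at h
  exact h.false

lemma getD_pos_of_lt_length (hl : ∀ x ∈ l, 0 < x) {i : ℕ} (hi : i < l.length) :
    0 < l.getD i 0 := by
  rw [List.getD_eq_getElem _ _ hi]
  exact hl _ (List.getElem_mem hi)

lemma getD_le_getD_of_le (hl : l.Pairwise (· ≥ ·)) {i j : ℕ} (hij : i ≤ j) :
    l.getD j 0 ≤ l.getD i 0 := by
  rcases lt_or_ge j l.length with hj | hj
  · simp only [List.getD_eq_getElem _ _ hj, List.getD_eq_getElem _ _ (hij.trans_lt hj)]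
    rcases hij.eq_or_lt with rfl | hlt
    · rfl
    · exact List.pairwise_iff_getElem.mp hl i j _ hj hlt
  · simp only [List.getD_eq_default _ _ hj, zero_le]

lemma sum_eq_sum_range_getD {K : ℕ} (hK : l.length ≤ K) :
    l.sum = ∑ j ∈ range K, l.getD j 0 := by
  induction l generalizing K with
  | nil => simp
  | cons a l ih =>
    obtain ⟨K, rfl⟩ : ∃ K', K = K' + 1 := ⟨K - 1, by simp at hK; omega⟩
    rw [sum_range_succ', List.sum_cons, ih (by simpa using hK)]
    simp [add_comm]

lemma eq_of_getD_eq {l' : List ℕ} (hl : ∀ x ∈ l, 0 < x) (hl' : ∀ x ∈ l', 0 < x)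
    (h : ∀ j, l.getD j 0 = l'.getD j 0) : l = l' := by
  have hlen : l.length = l'.length := eq_of_forall_lt_iff fun j =>
    ⟨fun hj => lt_length_of_getD_pos (h j ▸ getD_pos_of_lt_length hl hj),
     fun hj => lt_length_of_getD_pos ((h j).symm ▸ getD_pos_of_lt_length hl' hj)⟩
  refine List.ext_getElem hlen fun j hj hj' => ?_
  rw [← List.getD_eq_getElem _ 0, ← List.getD_eq_getElem _ 0, h]

end Rows

lemma sum_range_sub_indicator {f : ℕ → ℕ} {b : ℕ} (hb : 0 < f b) (k : ℕ) :
    ∑ j ∈ range k, (f j - if j = b then 1 else 0) + (if b < k then 1 else 0) =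
      ∑ j ∈ range k, f j := by
  induction k with
  | zero => simp
  | succ k ih =>
    rw [sum_range_succ, sum_range_succ, ← ih]
    split_ifs <;> subst_vars <;> omega

lemma perm_set_of_getElem_eq {α : Type*} [DecidableEq α] {l : List α} {i b : ℕ}
    (hi : i < l.length) (hb : b < l.length) (h : l[i] = l[b]) (x : α) :
    (l.set i x).Perm (l.set b x) := by
  rw [List.perm_iff_count]
  intro a
  rw [List.count_set hi, List.count_set hb, h]

lemma getD_filter_ne_zero {L : List ℕ} (hL : L.Pairwise (· ≥ ·)) (j : ℕ) :
    (L.filter (· ≠ 0)).getD j 0 = L.getD j 0 := by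
  induction L generalizing j with
  | nil => rfl
  | cons a L ih =>
    rw [List.pairwise_cons] at hL
    by_cases ha : a = 0
    · have hzero : ∀ x ∈ L, x = 0 := fun x hx => by have := hL.1 x hx; omega
      have hnil : L.filter (· ≠ 0) = [] := List.filter_eq_nil_iff.mpr (by simpa using hzero)
      rw [List.filter_cons_of_neg (by simpa using ha), hnil]
      rcases j with _ | j
      · simp [ha]
      · rw [List.getD_cons_succ]
        rcases lt_or_ge j L.length with hj | hj
        · rw [List.getD_eq_getElem _ _ hj, hzero _ (List.getElem_mem hj)]; rfl
        · rw [List.getD_eq_default _ _ hj]; rfl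
    · rw [List.filter_cons_of_pos (by simpa using ha)]
      rcases j with _ | j
      · rfl
      · exact ih hL.2 j

section Step

variable {l : List ℕ} (hl : l.Pairwise (· ≥ ·))
include hl

lemma exists_corner {i : ℕ} (hi : 0 < l.getD i 0) :
    ∃ b, i ≤ b ∧ l.getD b 0 = l.getD i 0 ∧ l.getD (b + 1) 0 < l.getD b 0 := by
  classical
  set P : ℕ → Prop := fun j => l.getD i 0 ≤ l.getD j 0
  have hil : i ≤ l.length := (lt_length_of_getD_pos hi).le
  have hib : i ≤ Nat.findGreatest P l.length := Nat.le_findGreatest hil le_rfl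
  have hb : l.getD _ 0 = l.getD i 0 :=
    le_antisymm (getD_le_getD_of_le hl hib) (Nat.findGreatest_spec (P := P) hil le_rfl)
  refine ⟨_, hib, hb, ?_⟩
  rw [hb]
  by_cases hlen : Nat.findGreatest P l.length + 1 ≤ l.length
  · exact not_le.mp (Nat.findGreatest_is_greatest (P := P) (Nat.lt_succ_self _) hlen)
  · rwa [List.getD_eq_default _ _ (by omega)]

lemma pairwise_set_of_corner {b : ℕ} (hcorner : l.getD (b + 1) 0 < l.getD b 0) :
    (l.set b (l.getD b 0 - 1)).Pairwise (· ≥ ·) := by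
  rw [List.pairwise_iff_getElem]
  intro p q hp hq hpq
  simp only [List.length_set] at hp hq
  have hpq' : l.getD q 0 ≤ l.getD p 0 := getD_le_getD_of_le hl hpq.le
  have hqb : b < q → l.getD q 0 ≤ l.getD (b + 1) 0 := fun h => getD_le_getD_of_le hl h
  have hpb : p < b → l.getD b 0 ≤ l.getD p 0 := fun h => getD_le_getD_of_le hl h.le
  rw [List.getElem_set, List.getElem_set]
  split_ifs <;> subst_vars <;> (try simp only [← List.getD_eq_getElem _ 0]) <;> omega

/-- After re-sorting, deleting a box of row `i` amounts to deleting the box of the last row `b`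
of the block of rows equal to row `i`; no re-sorting is then needed. -/
lemma gpStep_eq_filter_set {i b : ℕ} (hib : i ≤ b) (hb : l.getD b 0 = l.getD i 0)
    (hcorner : l.getD (b + 1) 0 < l.getD b 0) :
    gpStep l i = (l.set b (l.getD b 0 - 1)).filter (· ≠ 0) := by
  have hbl : b < l.length := lt_length_of_getD_pos (by omega)
  have hil : i < l.length := by omega
  have hperm : ((l.set i (l.getD i 0 - 1)).filter (· ≠ 0)).Perm
      ((l.set b (l.getD b 0 - 1)).filter (· ≠ 0)) := by
    rw [hb]
    refine (perm_set_of_getElem_eq hil hbl ?_ _).filter _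
    rw [← List.getD_eq_getElem _ 0, ← List.getD_eq_getElem _ 0, hb]
  exact ((List.perm_insertionSort _ _).trans hperm).eq_of_pairwise
    (fun _ _ _ _ h₁ h₂ => le_antisymm h₂ h₁) (List.pairwise_insertionSort _ _)
    ((pairwise_set_of_corner hl hcorner).filter _)

lemma getD_gpStep {i b : ℕ} (hib : i ≤ b) (hb : l.getD b 0 = l.getD i 0)
    (hcorner : l.getD (b + 1) 0 < l.getD b 0) (j : ℕ) :
    (gpStep l i).getD j 0 = l.getD j 0 - if j = b then 1 else 0 := by
  have hbl : b < l.length := lt_length_of_getD_pos (by omega)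
  rw [gpStep_eq_filter_set hl hib hb hcorner,
    getD_filter_ne_zero (pairwise_set_of_corner hl hcorner), List.getD_eq_getElem?_getD,
    List.getElem?_set]
  split_ifs <;> subst_vars <;> simp_all [List.getD_eq_getElem?_getD]

end Step

lemma isPartitionOf_gpStep {n : ℕ} {l : List ℕ} (hl : IsPartitionOf (n + 1) l) {i : ℕ}
    (hi : i < l.length) : IsPartitionOf n (gpStep l i) := by
  obtain ⟨hsorted, hpos, hsum⟩ := hl
  obtain ⟨b, hib, hb, hcorner⟩ := exists_corner hsorted (getD_pos_of_lt_length hpos hi)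
  refine ⟨List.pairwise_insertionSort _ _, fun x hx => ?_, ?_⟩
  · have hx' := List.mem_filter.mp ((List.perm_insertionSort _ _).mem_iff.mp hx)
    simpa [Nat.pos_iff_ne_zero] using hx'.2
  · have hlen : (gpStep l i).length ≤ l.length := by
      rw [gpStep, List.length_insertionSort]
      exact (List.length_filter_le _ _).trans (List.length_set ..).le
    have hbl : b < l.length := lt_length_of_getD_pos (by omega)
    have key := sum_range_sub_indicator (f := (l.getD · 0)) (b := b) (by omega) l.length
    simp only [← getD_gpStep hsorted hib hb hcorner, if_pos hbl,
      ← sum_eq_sum_range_getD hlen, ← sum_eq_sum_range_getD le_rfl] at key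
    omega

def Dominates (τ ν : List ℕ) : Prop :=
  ∀ k, ∑ j ∈ range k, ν.getD j 0 ≤ ∑ j ∈ range k, τ.getD j 0

lemma sum_range_lt_of_flat_of_drop {f g : ℕ → ℕ} (hg : Antitone g)
    (hdom : ∀ k, ∑ j ∈ range k, f j ≤ ∑ j ∈ range k, g j) {i k : ℕ} (hik : i < k)
    (hf : ∀ j ∈ Icc i k, f j = f i) (hgk : g k < g i) :
    ∑ j ∈ range k, f j < ∑ j ∈ range k, g j := by
  by_contra hle
  have heq := le_antisymm (hdom k) (not_lt.mp hle)
  have hsplit (h : ℕ → ℕ) :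
      ∑ j ∈ range k, h j = ∑ j ∈ range i, h j + ∑ x ∈ range (k - i), h (i + x) := by
    rw [← sum_range_add, Nat.add_sub_cancel' hik.le]
  have hflat : ∑ x ∈ range (k - i), f (i + x) = ∑ x ∈ range (k - i), f i :=
    sum_congr rfl fun x hx => hf _ (by simp only [mem_range] at hx; simp only [mem_Icc]; omega)
  -- Either the inequality already fails at `k + 1`, or `g` beats `f` termwise on `[i, k)`.
  rcases lt_or_ge (g k) (f i) with hlt | hge
  · have := hdom (k + 1)
    rw [sum_range_succ, sum_range_succ, hf k (by simp only [mem_Icc]; omega)] at this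
    omega
  · have hbig : ∑ x ∈ range (k - i), f i < ∑ x ∈ range (k - i), g (i + x) := by
      refine sum_lt_sum (fun x hx => hge.trans (hg ?_)) ⟨0, by simp; omega, ?_⟩
      · simp only [mem_range] at hx
        omega
      · simpa using hge.trans_lt hgk
    have := hdom i
    rw [hsplit f, hsplit g, hflat] at heq
    omega

lemma dominates_gpStep {ν τ : List ℕ} (hν : ν.Pairwise (· ≥ ·)) (hτ : τ.Pairwise (· ≥ ·))
    (hdom : Dominates τ ν) {i : ℕ} (hνi : 0 < ν.getD i 0) (hτi : 0 < τ.getD i 0) :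
    Dominates (gpStep τ i) (gpStep ν i) := by
  obtain ⟨bν, hibν, hbν, hcν⟩ := exists_corner hν hνi
  obtain ⟨bτ, hibτ, hbτ, hcτ⟩ := exists_corner hτ hτi
  intro k
  simp only [getD_gpStep hν hibν hbν hcν, getD_gpStep hτ hibτ hbτ hcτ]
  have eν := sum_range_sub_indicator (f := (ν.getD · 0)) (b := bν) (by omega) k
  have eτ := sum_range_sub_indicator (f := (τ.getD · 0)) (b := bτ) (by omega) k
  have := hdom k
  by_cases hbad : bτ < k ∧ k ≤ bν
  · have hflat : ∀ j ∈ Icc i k, ν.getD j 0 = ν.getD i 0 := fun j hj => by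
      have := getD_le_getD_of_le hν (mem_Icc.mp hj).1
      have := getD_le_getD_of_le hν ((mem_Icc.mp hj).2.trans hbad.2)
      omega
    have hdrop : τ.getD k 0 < τ.getD i 0 := by
      have := getD_le_getD_of_le hτ (show bτ + 1 ≤ k from hbad.1)
      omega
    have := sum_range_lt_of_flat_of_drop (fun _ _ h => getD_le_getD_of_le hτ h) hdom
      (by omega) hflat hdrop
    simp only [if_pos hbad.1, if_neg (not_lt.mpr hbad.2)] at eν eτ
    omega
  · split_ifs at eν eτ <;> omega

lemma dominates_gpStep_zero {l : List ℕ} (hl : l.Pairwise (· ≥ ·)) {i : ℕ}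
    (hi : 0 < l.getD i 0) : Dominates (gpStep l i) (gpStep l 0) := by
  have hl0i := getD_le_getD_of_le hl (Nat.zero_le i)
  obtain ⟨b₀, -, hb₀, hc₀⟩ := exists_corner hl (hi.trans_le hl0i)
  obtain ⟨b, hib, hb, hc⟩ := exists_corner hl hi
  have hle : b₀ ≤ b := by
    by_contra h
    have := getD_le_getD_of_le hl (show b + 1 ≤ b₀ by omega)
    omega
  intro k
  simp only [getD_gpStep hl (Nat.zero_le _) hb₀ hc₀, getD_gpStep hl hib hb hc]
  have e₀ := sum_range_sub_indicator (f := (l.getD · 0)) (b := b₀) (by omega) k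
  have e := sum_range_sub_indicator (f := (l.getD · 0)) (b := b) (by omega) k
  split_ifs at e₀ e <;> omega

lemma lt_length_of_dominates {n : ℕ} {ν τ : List ℕ} (hν : ν.sum = n)
    (hτ : IsPartitionOf n τ) (hdom : Dominates τ ν) {i : ℕ} (hi : i < τ.length) :
    i < ν.length := by
  by_contra h
  have hνsum : ν.sum = ∑ j ∈ range i, ν.getD j 0 := sum_eq_sum_range_getD (not_lt.mp h)
  have hτsum : τ.sum = ∑ j ∈ range τ.length, τ.getD j 0 := sum_eq_sum_range_getD le_rfl
  have hprefix := sum_le_sum_of_subset (f := (τ.getD · 0)) (range_subset_range.mpr hi)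
  rw [sum_range_succ] at hprefix
  have := hdom i
  have := getD_pos_of_lt_length hτ.2.1 hi
  have := hτ.2.2
  omega

lemma gpAux_subset_of_dominates {N : ℕ} {ν τ : List ℕ} (hν : IsPartitionOf N ν)
    (hτ : IsPartitionOf N τ) (hdom : Dominates τ ν) : gpAux N τ ⊆ gpAux N ν := by
  induction N generalizing ν τ with
  | zero => exact subset_rfl
  | succ N ih =>
    intro p hp
    simp only [gpAux, Set.mem_iUnion, Set.mem_image, mem_range] at hp ⊢
    obtain ⟨i, hiτ, q, hq, rfl⟩ := hp
    have hiν := lt_length_of_dominates hν.2.2 hτ hdom hiτ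
    refine ⟨i, hiν, q, ih (isPartitionOf_gpStep hν hiν) (isPartitionOf_gpStep hτ hiτ) ?_ hq, rfl⟩
    exact dominates_gpStep hν.1 hτ.1 hdom (getD_pos_of_lt_length hν.2.1 hiν)
      (getD_pos_of_lt_length hτ.2.1 hiτ)

lemma gpAux_gpStep_zero_subset {N : ℕ} {l : List ℕ} (hl : 0 < l.length) :
    gpAux N (gpStep l 0) ⊆ gpAux (N + 1) l := by
  intro p hp
  simp only [gpAux, Set.mem_iUnion, Set.mem_image, mem_range]
  exact ⟨0, hl, p, hp, by rw [pow_zero, one_mul]⟩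

lemma eq_of_getD_le_of_sum_le {m n : ℕ} {l l' : List ℕ} (hl : IsPartitionOf m l)
    (hl' : IsPartitionOf n l') (hsub : ∀ j, l.getD j 0 ≤ l'.getD j 0) (hnm : n ≤ m) :
    l = l' := by
  obtain ⟨K, hlK, hl'K⟩ : ∃ K, l.length ≤ K ∧ l'.length ≤ K :=
    ⟨_, le_max_left _ _, le_max_right _ _⟩
  have hs := sum_eq_sum_range_getD hlK
  have hs' := sum_eq_sum_range_getD hl'K
  have hK : ∀ j ∈ range K, l.getD j 0 = l'.getD j 0 := by
    refine (sum_eq_sum_iff_of_le fun j _ => hsub j).mp ?_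
    have := hl.2.2
    have := hl'.2.2
    have := sum_le_sum fun j (_ : j ∈ range K) => hsub j
    omega
  refine eq_of_getD_eq hl.2.1 hl'.2.1 fun j => ?_
  by_cases hj : j < K
  · exact hK j (mem_range.mpr hj)
  · rw [List.getD_eq_default _ _ (by omega), List.getD_eq_default _ _ (by omega)]

lemma exists_gpStep_getD_le {m n : ℕ} {l l' : List ℕ} (hl : IsPartitionOf m l)
    (hl' : IsPartitionOf n l') (hsub : ∀ j, l.getD j 0 ≤ l'.getD j 0) (hmn : m < n) :
    ∃ i < l'.length, ∀ j, l.getD j 0 ≤ (gpStep l' i).getD j 0 := by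
  classical
  set P : ℕ → Prop := fun j => l.getD j 0 < l'.getD j 0
  obtain ⟨j₀, hj₀⟩ : ∃ j, P j := by
    by_contra! h
    simp only [P, not_lt] at h
    have := eq_of_getD_le_of_sum_le hl' hl h hmn.le
    have := hl.2.2
    have := hl'.2.2
    subst_vars
    omega
  have hj₀len : j₀ ≤ l'.length := (lt_length_of_getD_pos (hj₀.trans_le' (Nat.zero_le _))).le
  set i := Nat.findGreatest P l'.length
  have hi : P i := Nat.findGreatest_spec hj₀len hj₀
  have hnext : l'.getD (i + 1) 0 ≤ l.getD (i + 1) 0 := by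
    by_cases h : i + 1 ≤ l'.length
    · exact not_lt.mp (Nat.findGreatest_is_greatest (P := P) (Nat.lt_succ_self _) h)
    · rw [List.getD_eq_default _ _ (by omega)]
      exact Nat.zero_le _
  have hcorner : l'.getD (i + 1) 0 < l'.getD i 0 := by
    have := getD_le_getD_of_le hl.1 (Nat.le_succ i)
    exact hnext.trans_lt (this.trans_lt hi)
  refine ⟨i, lt_length_of_getD_pos (hi.trans_le' (Nat.zero_le _)), fun j => ?_⟩
  rw [getD_gpStep hl'.1 le_rfl rfl hcorner]
  split_ifs with h
  · exact h ▸ Nat.le_sub_one_of_lt hi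
  · simpa using hsub j

theorem gpBasis_subset_of_getD_le {m n : ℕ} {l l' : List ℕ} (hl : IsPartitionOf m l)
    (hl' : IsPartitionOf n l') (hsub : ∀ j, l.getD j 0 ≤ l'.getD j 0) :
    gpBasis l ⊆ gpBasis l' := by
  induction n generalizing l' with
  | zero => rw [eq_of_getD_le_of_sum_le hl hl' hsub (Nat.zero_le m)]
  | succ N ih =>
    by_cases hm : N + 1 ≤ m
    · rw [eq_of_getD_le_of_sum_le hl hl' hsub hm]
    obtain ⟨i, hi, hsub'⟩ := exists_gpStep_getD_le hl hl' hsub (by omega)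
    have hstep := isPartitionOf_gpStep hl' hi
    have hstep₀ := isPartitionOf_gpStep hl' (i := 0) (by omega)
    calc gpBasis l ⊆ gpBasis (gpStep l' i) := ih hstep hsub'
      _ = gpAux N (gpStep l' i) := by rw [gpBasis, hstep.2.2]
      _ ⊆ gpAux N (gpStep l' 0) := gpAux_subset_of_dominates hstep₀ hstep
          (dominates_gpStep_zero hl'.1 (getD_pos_of_lt_length hl'.2.1 hi))
      _ ⊆ gpAux (N + 1) l' := gpAux_gpStep_zero_subset (by omega)
      _ = gpBasis l' := by rw [gpBasis, hl'.2.2]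

end GarsiaProcesi

theorem stmt7_general (m n : ℕ) (l l' : List ℕ)
    (hl : IsPartitionOf m l) (hl' : IsPartitionOf n l')
    (hsub : ∀ i : ℕ, l.getD i 0 ≤ l'.getD i 0) :
    gpBasis l ⊆ gpBasis l' :=
  GarsiaProcesi.gpBasis_subset_of_getD_le hl hl' hsub

/-- If `λ ⊆ λ'` as Young diagrams then `B(λ) ⊆ B(λ')`. -/
theorem stmt7 (m n : ℕ) (hmn : m ≤ n) (l l' : List ℕ)
    (hl : IsPartitionOf m l) (hl' : IsPartitionOf n l')
    (hsub : ∀ i : ℕ, l.getD i 0 ≤ l'.getD i 0) :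
    gpBasis l ⊆ gpBasis l' :=
  stmt7_general m n l l' hl hl' hsub
end

section
/- For i ∈ {1,2,3,4} and n ≥ i, the number of tuples (d_2,...,d_n) of nonnegative integers with d_2 + ⋯ + d_n = i and d_k ≤ k−1 for all k equals C(n−2+i, i) − C(n−3+i, i−2). -/
/-!
Let `g(m, i)` count the tuples of length `m` with `d_{k+2} ≤ k + 1` and sum `i`. For `i ≤ m + 2` the
bound on the last entry is never reached, so splitting it off gives `g(m + 1, i) = ∑_{j ≤ i} g(m, j)`.
By the hockey-stick identity the closed form satisfies the same recurrence, so induction on `m`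
proves it for `i ≤ m + 1`, except at `i = m + 1`, where the induction hypothesis would be needed at
`g(m - 1, m + 1)`, outside its range; for `i ≤ 4` these are three cases, checked directly.
-/

open Finset

def boundedTuples {m : ℕ} (b : Fin m → ℕ) (i : ℕ) : Finset (Fin m → ℕ) :=
  (Fintype.piFinset fun k => range (b k)).filter fun d => ∑ k, d k = i

@[simp]
lemma mem_boundedTuples {m : ℕ} {b : Fin m → ℕ} {i : ℕ} {d : Fin m → ℕ} :
    d ∈ boundedTuples b i ↔ (∀ k, d k < b k) ∧ ∑ k, d k = i := by
  simp [boundedTuples]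

lemma card_boundedTuples_succ {m : ℕ} (b : Fin (m + 1) → ℕ) {i : ℕ}
    (hi : i < b (Fin.last m)) :
    #(boundedTuples b i) = ∑ j ∈ range (i + 1), #(boundedTuples (Fin.init b) j) := by
  rw [card_eq_sum_card_fiberwise (f := fun d => ∑ k : Fin m, d k.castSucc) (t := range (i + 1))]
  · refine sum_congr rfl fun j hj => ?_
    have hji : j ≤ i := Nat.lt_succ_iff.mp (mem_range.mp hj)
    refine card_nbij' Fin.init (fun d => Fin.snoc d (i - j)) ?_ ?_ ?_ ?_
    · intro d hd
      simp only [mem_coe, mem_filter, mem_boundedTuples] at hd ⊢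
      exact ⟨fun k => hd.1.1 k.castSucc, hd.2⟩
    · intro d hd
      simp only [mem_coe, mem_filter, mem_boundedTuples, Fin.sum_univ_castSucc,
        Fin.snoc_castSucc, Fin.snoc_last] at hd ⊢
      refine ⟨⟨fun k => ?_, by omega⟩, hd.2⟩
      induction k using Fin.lastCases with
      | last => rw [Fin.snoc_last]; omega
      | cast k => rw [Fin.snoc_castSucc]; exact hd.1 k
    · intro d hd
      simp only [mem_coe, mem_filter, mem_boundedTuples, Fin.sum_univ_castSucc] at hd
      obtain ⟨⟨-, hsum⟩, rfl⟩ := hd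
      rw [← hsum, Nat.add_sub_cancel_left]
      exact Fin.snoc_init_self d
    · intro d _
      exact Fin.init_snoc _ _
  · intro d hd
    simp only [mem_coe, mem_boundedTuples, Fin.sum_univ_castSucc] at hd
    simp only [mem_coe, mem_range]
    omega

lemma sum_range_choose_add_sub_one (m i : ℕ) :
    ∑ a ∈ range (i + 1), (m + a - 1).choose a = (m + i).choose i := by
  cases m with
  | zero =>
    rw [sum_range_succ', sum_eq_zero fun a _ => Nat.choose_eq_zero_of_lt (by omega)]
    simp
  | succ m =>
    have h (a : ℕ) : (m + 1 + a - 1).choose a = (a + m).choose m := by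
      rw [show m + 1 + a - 1 = a + m by omega, Nat.choose_symm_add]
    rw [sum_congr rfl fun a _ => h a, Nat.sum_range_add_choose, add_assoc, add_comm i,
      Nat.choose_symm_add]

lemma sum_range_ite_choose (m i : ℕ) :
    ∑ a ∈ range (i + 1), (if 2 ≤ a then (m + a - 2).choose (a - 2) else 0) =
      if 2 ≤ i then (m + 1 + i - 2).choose (i - 2) else 0 := by
  rcases Nat.lt_or_ge i 2 with hi | hi
  · interval_cases i <;> simp [sum_range_succ]
  · obtain ⟨i, rfl⟩ := Nat.exists_eq_add_of_le' hi
    rw [sum_range_succ', sum_range_succ']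
    simp only [le_add_iff_nonneg_left, zero_le, ↓reduceIte, Nat.reduceSubDiff, zero_add,
      Nat.not_ofNat_le_one, add_zero, nonpos_iff_eq_zero, OfNat.ofNat_ne_zero,
      add_tsub_cancel_right]
    rw [show m + 1 + (i + 2) - 2 = m + 1 + i by omega, ← sum_range_choose_add_sub_one]
    refine sum_congr rfl fun a _ => ?_
    congr 1
    omega

/-- `d k` stands for `d_{k+2}`: these are the Lehmer codes of the permutations of `Fin (m + 1)`
with `i` inversions. -/
def lehmerCodes (m i : ℕ) : Finset (Fin m → ℕ) :=
  boundedTuples (fun k : Fin m => (k : ℕ) + 2) i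

lemma card_lehmerCodes_succ {m i : ℕ} (hi : i ≤ m + 1) :
    #(lehmerCodes (m + 1) i) = ∑ j ∈ range (i + 1), #(lehmerCodes m j) :=
  card_boundedTuples_succ _ (by simp; omega)

def inversionFormula (m i : ℕ) : ℤ :=
  ((m + i - 1).choose i : ℤ) - ((if 2 ≤ i then (m + i - 2).choose (i - 2) else 0 : ℕ) : ℤ)

lemma inversionFormula_succ (m i : ℕ) :
    inversionFormula (m + 1) i = ∑ a ∈ range (i + 1), inversionFormula m a := by
  simp only [inversionFormula, sum_sub_distrib, ← Nat.cast_sum, sum_range_choose_add_sub_one,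
    sum_range_ite_choose, show m + 1 + i - 1 = m + i by omega]

lemma card_lehmerCodes {m i : ℕ} (hi : i ≤ 4) (him : i ≤ m + 1) :
    (#(lehmerCodes m i) : ℤ) = inversionFormula m i := by
  induction m generalizing i with
  | zero => interval_cases i <;> decide
  | succ m ih =>
    obtain him | rfl := Nat.lt_or_eq_of_le him
    · rw [card_lehmerCodes_succ (by omega), inversionFormula_succ]
      push_cast
      refine sum_congr rfl fun a ha => ?_
      have := mem_range.mp ha
      exact ih (by omega) (by omega)
    · have : m ≤ 2 := by omega
      interval_cases m <;> decide

/-- For `i ∈ {1,2,3,4}` and `n ≥ i`, the number of tuples `(d_2,...,d_n)` of nonnegative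
integers with `d_2 + ⋯ + d_n = i` and `d_k ≤ k - 1` equals `C(n-2+i, i) - C(n-3+i, i-2)`
(with the convention `C(a, b) = 0` for `b < 0`). -/
theorem stmt11 (i n : ℕ) (hi : i ∈ ({1, 2, 3, 4} : Finset ℕ)) (hn : i ≤ n) :
    (((Fintype.piFinset (fun k : Fin (n - 1) => Finset.range ((k : ℕ) + 2))).filter
        (fun d => ∑ k, d k = i)).card : ℤ) =
      ((n + i - 2).choose i : ℤ) - (if 2 ≤ i then ((n + i - 3).choose (i - 2) : ℤ) else 0) := by
  obtain ⟨hi₁, hi₄⟩ : 1 ≤ i ∧ i ≤ 4 := by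
    simp only [mem_insert, mem_singleton] at hi
    omega
  have key := card_lehmerCodes hi₄ (show i ≤ n - 1 + 1 by omega)
  rwa [inversionFormula, show n - 1 + i - 1 = n + i - 2 by omega,
    show n - 1 + i - 2 = n + i - 3 by omega, Nat.cast_ite, Nat.cast_zero] at key
end

section
/- For n ≥ 5, the number of tuples (d_2,...,d_n) of nonnegative integers with d_2 + ⋯ + d_n = 5 and d_k ≤ k−1 for all k equals C(n+3,5) − C(n+2,3) + 1. -/
/-!
Peel off the first four coordinates `d_2, …, d_5`, the only ones whose bounds `k - 1 < 5` can
bind. Each remaining `d_k` has bound `k - 1 ≥ 5`, which no coordinate of a tuple of sum at most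
`5` can exceed, so the remaining `n - 5` coordinates are free and stars and bars counts them:
`multichoose (n - 5) r` tuples of sum `r`. Summing over the `22, 20, 15, 9, 4, 1` ways to give
the first four coordinates the sum `5, 4, …, 0` leaves a polynomial identity in `n`.
-/

open Finset Nat

/-- Coordinate `k` of a tuple in `boundedCompositions 2 (n - 1) m` is the paper's `d_{k+2}`. -/
def boundedCompositions (c N m : ℕ) : Finset (Fin N → ℕ) :=
  {d ∈ Fintype.piFinset fun k : Fin N => range (k + c) | ∑ k, d k = m}

lemma card_piAntidiag_univ_fin (N m : ℕ) :
    #(piAntidiag (univ : Finset (Fin N)) m) = N.multichoose m := by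
  have := card_finsuppAntidiag_nat_eq_multichoose (s := (univ : Finset (Fin N))) m
  rwa [finsuppAntidiag, card_map, card_attach, Finset.card_univ, Fintype.card_fin] at this

lemma boundedCompositions_eq_piAntidiag {c N m : ℕ} (h : m < c) :
    boundedCompositions c N m = piAntidiag univ m := by
  ext d
  simp only [boundedCompositions, mem_filter, Fintype.mem_piFinset, mem_range, mem_piAntidiag,
    mem_univ, implies_true, and_true, and_iff_right_iff_imp]
  rintro rfl k
  have := single_le_sum (fun i _ => Nat.zero_le (d i)) (mem_univ k)
  omega

lemma cons_mem_boundedCompositions_succ {c N m j : ℕ} {g : Fin N → ℕ} :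
    Fin.cons j g ∈ boundedCompositions c (N + 1) m ↔
      j < c ∧ j ≤ m ∧ g ∈ boundedCompositions (c + 1) N (m - j) := by
  simp only [boundedCompositions, mem_filter, Fintype.mem_piFinset, Fin.forall_fin_succ,
    Fin.sum_univ_succ, Fin.cons_zero, Fin.cons_succ, Fin.val_zero, Fin.val_succ, mem_range]
  constructor
  · rintro ⟨⟨hj, hg⟩, hsum⟩
    exact ⟨by omega, by omega, fun k => by have := hg k; omega, by omega⟩
  · rintro ⟨hj, hjm, hg, hsum⟩
    exact ⟨⟨by omega, fun k => by have := hg k; omega⟩, by omega⟩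

lemma card_boundedCompositions_succ (c N m : ℕ) :
    #(boundedCompositions c (N + 1) m) =
      ∑ j ∈ range c with j ≤ m, #(boundedCompositions (c + 1) N (m - j)) := by
  rw [← card_sigma]
  refine card_nbij' (fun d => ⟨d 0, Fin.tail d⟩) (fun p => Fin.cons p.1 p.2) ?_ ?_ ?_ ?_
  · intro d hd
    rw [mem_coe, ← Fin.cons_self_tail d, cons_mem_boundedCompositions_succ] at hd
    simpa [and_assoc] using hd
  · rintro ⟨j, g⟩ hp
    simp only [coe_sigma, Set.mem_sigma_iff, mem_coe, mem_filter, mem_range] at hp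
    exact cons_mem_boundedCompositions_succ.2 ⟨hp.1.1, hp.1.2, hp.2⟩
  · intro d _
    exact Fin.cons_self_tail d
  · rintro ⟨j, g⟩ _
    simp

lemma card_boundedCompositions_two_five (t : ℕ) :
    #(boundedCompositions 2 (t + 4) 5) =
      22 + 20 * t + 15 * t.multichoose 2 + 9 * t.multichoose 3 + 4 * t.multichoose 4 +
        t.multichoose 5 := by
  simp only [card_boundedCompositions_succ, sum_filter, sum_range_succ, sum_range_zero]
  norm_num [boundedCompositions_eq_piAntidiag, card_piAntidiag_univ_fin]
  omega

lemma cast_multichoose_eq_ascFactorial_div {K : Type*} [Field K] [CharZero K] (n k : ℕ) :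
    (n.multichoose k : K) = n.ascFactorial k / k ! := by
  rw [multichoose_eq, ascFactorial_eq_factorial_mul_choose', cast_mul,
    mul_div_cancel_left₀ _ (cast_ne_zero.2 k.factorial_ne_zero)]

lemma multichoose_identity (t : ℕ) :
    22 + 20 * t + 15 * t.multichoose 2 + 9 * t.multichoose 3 + 4 * t.multichoose 4 +
        t.multichoose 5 + (t + 5).multichoose 3 = (t + 4).multichoose 5 + 1 := by
  apply cast_injective (R := ℚ)
  push_cast [cast_multichoose_eq_ascFactorial_div, ascFactorial_succ, ascFactorial_zero,
    factorial_succ]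
  ring

/-- For `n ≥ 5`, the number of tuples `(d_2,...,d_n)` of nonnegative integers with
`d_2 + ⋯ + d_n = 5` and `d_k ≤ k - 1` equals `C(n+3,5) - C(n+2,3) + 1`. -/
theorem stmt12 (n : ℕ) (hn : 5 ≤ n) :
    (((Fintype.piFinset (fun k : Fin (n - 1) => Finset.range ((k : ℕ) + 2))).filter
        (fun d => ∑ k, d k = 5)).card : ℤ) =
      ((n + 3).choose 5 : ℤ) - ((n + 2).choose 3 : ℤ) + 1 := by
  obtain ⟨t, rfl⟩ : ∃ t, n = t + 5 := ⟨n - 5, by omega⟩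
  change (#(boundedCompositions 2 (t + 4) 5) : ℤ) = _
  have h₅ : (t + 5 + 3).choose 5 = (t + 4).multichoose 5 := by
    rw [multichoose_eq]; congr 1
  have h₃ : (t + 5 + 2).choose 3 = (t + 5).multichoose 3 := by
    rw [multichoose_eq]; congr 1
  rw [card_boundedCompositions_two_five, h₅, h₃]
  have := multichoose_identity t
  omega
end

section
/- For n ≥ 6, the number of tuples (d_2,...,d_n) of nonnegative integers with d_2 + ⋯ + d_n = 6 and d_k ≤ k−1 for all k equals C(n+4,6) − C(n+3,4) + n. -/
/-!
Write `T N s` for the tables `(d_0, …, d_{N-1})` with `d_k ≤ k + 1` and `∑ d_k = s`; their generating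
function is `∏_{k ≤ N+1} (1 - x^k) / (1 - x)^(N+1)`. Splitting off the last entry gives
`#T (N+1) s = ∑_{j ≤ s} #T N j` for `s ≤ N + 1`, hence the Pascal-type rule
`#T (N+1) (s+1) = #T N (s+1) + #T (N+1) s` for `s ≤ N`. Euler's pentagonal number theorem predicts
`#T N s = C(N+s-1, s) - C(N+s-2, s-2) + C(N+s-5, s-5)` for `s ≤ min 6 (N+1)` (binomials with
negative lower index read as `0`). These closed forms obey the same Pascal rule, so they are proved
one `s` at a time by induction on `N`, starting at `N = s - 1`.
-/

open Finset Fintype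

/-- Inversion tables of the permutations of `N + 1` letters with `s` inversions: entry `k` is
`d_{k+2}`. -/
def inversionTables (N s : ℕ) : Finset (Fin N → ℕ) :=
  {d ∈ piFinset fun k : Fin N => range (k + 2) | ∑ k, d k = s}

namespace inversionTables

variable {N s : ℕ}

theorem mem_succ_iff {d : Fin (N + 1) → ℕ} :
    d ∈ inversionTables (N + 1) s ↔
      Fin.init d ∈ inversionTables N (s - d (Fin.last N)) ∧ d (Fin.last N) ≤ N + 1 ∧
        d (Fin.last N) ≤ s := by
  simp only [inversionTables, mem_filter, Fin.sum_univ_castSucc, mem_piFinset,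
    Fin.forall_fin_succ', mem_range, Fin.val_castSucc, Fin.val_last, Fin.init]
  constructor
  · rintro ⟨⟨hinit, hlast⟩, hsum⟩
    exact ⟨⟨hinit, by omega⟩, by omega, by omega⟩
  · rintro ⟨⟨hinit, hsum⟩, hlast, hle⟩
    exact ⟨⟨hinit, by omega⟩, by omega⟩

theorem card_succ (hs : s ≤ N + 1) :
    #(inversionTables (N + 1) s) = ∑ j ∈ range (s + 1), #(inversionTables N j) := by
  rw [card_eq_sum_card_fiberwise (f := fun d => d (Fin.last N)) (t := range (s + 1)),
    ← sum_range_reflect, add_tsub_cancel_right]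
  · refine sum_congr rfl fun x hx => card_nbij' Fin.init (Fin.snoc · (s - x)) ?_ ?_ ?_ ?_
    all_goals
      simp only [Set.MapsTo, Set.LeftInvOn, mem_coe, mem_filter]
    · rintro d ⟨hd, hlast⟩
      rw [mem_succ_iff, hlast, Nat.sub_sub_self (mem_range_succ_iff.mp hx)] at hd
      exact hd.1
    · intro e he
      rw [mem_succ_iff, Fin.init_snoc, Fin.snoc_last, Nat.sub_sub_self (mem_range_succ_iff.mp hx)]
      exact ⟨⟨he, by omega, by omega⟩, rfl⟩
    · rintro d ⟨-, hlast⟩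
      rw [← hlast]
      exact Fin.snoc_init_self d
    · intro e _
      exact Fin.init_snoc _ _
  · intro d hd
    rw [mem_coe, mem_succ_iff] at hd
    exact mem_range_succ_iff.mpr hd.2.2

theorem card_succ_succ (hs : s ≤ N) :
    #(inversionTables (N + 1) (s + 1)) =
      #(inversionTables N (s + 1)) + #(inversionTables (N + 1) s) := by
  rw [card_succ (by omega), sum_range_succ, card_succ (by omega), add_comm]

theorem card_zero_inversions : #(inversionTables N 0) = 1 := by
  induction N with
  | zero => decide
  | succ N ih => rw [card_succ (Nat.zero_le _), sum_range_one, ih]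

theorem card_one_inversion : #(inversionTables N 1) = N := by
  induction N with
  | zero => decide
  | succ N ih => rw [card_succ_succ N.zero_le, ih, card_zero_inversions]

theorem card_two_inversions (hN : 1 ≤ N) : #(inversionTables N 2) + 1 = (N + 1).choose 2 := by
  induction N, hN using Nat.le_induction with
  | base => decide
  | succ N hN ih =>
    have pascal₂ : (N + 2).choose 2 = (N + 1) + (N + 1).choose 2 := by
      rw [Nat.choose_succ_succ', Nat.choose_one_right]
    rw [card_succ_succ (by omega), card_one_inversion]
    simp only [add_assoc, Nat.reduceAdd] at *
    omega

theorem card_three_inversions (hN : 2 ≤ N) :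
    #(inversionTables N 3) + (N + 1) = (N + 2).choose 3 := by
  induction N, hN using Nat.le_induction with
  | base => decide
  | succ N hN ih =>
    have pascal₃ : (N + 3).choose 3 = (N + 2).choose 2 + (N + 2).choose 3 :=
      Nat.choose_succ_succ' _ _
    have hprev := card_two_inversions (N := N + 1) (by omega)
    rw [card_succ_succ (by omega)]
    simp only [add_assoc, Nat.reduceAdd] at *
    omega

theorem card_four_inversions (hN : 3 ≤ N) :
    #(inversionTables N 4) + (N + 2).choose 2 = (N + 3).choose 4 := by
  induction N, hN using Nat.le_induction with
  | base => decide
  | succ N hN ih =>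
    have pascal₂ : (N + 3).choose 2 = (N + 2) + (N + 2).choose 2 := by
      rw [Nat.choose_succ_succ', Nat.choose_one_right]
    have pascal₄ : (N + 4).choose 4 = (N + 3).choose 3 + (N + 3).choose 4 :=
      Nat.choose_succ_succ' _ _
    have hprev := card_three_inversions (N := N + 1) (by omega)
    rw [card_succ_succ (by omega)]
    simp only [add_assoc, Nat.reduceAdd] at *
    omega

theorem card_five_inversions (hN : 4 ≤ N) :
    #(inversionTables N 5) + (N + 3).choose 3 = (N + 4).choose 5 + 1 := by
  induction N, hN using Nat.le_induction with
  | base => decide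
  | succ N hN ih =>
    have pascal₃ : (N + 4).choose 3 = (N + 3).choose 2 + (N + 3).choose 3 :=
      Nat.choose_succ_succ' _ _
    have pascal₅ : (N + 5).choose 5 = (N + 4).choose 4 + (N + 4).choose 5 :=
      Nat.choose_succ_succ' _ _
    have hprev := card_four_inversions (N := N + 1) (by omega)
    rw [card_succ_succ (by omega)]
    simp only [add_assoc, Nat.reduceAdd] at *
    omega

theorem card_six_inversions (hN : 5 ≤ N) :
    #(inversionTables N 6) + (N + 4).choose 4 = (N + 5).choose 6 + (N + 1) := by
  induction N, hN using Nat.le_induction with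
  | base => decide
  | succ N hN ih =>
    have pascal₄ : (N + 5).choose 4 = (N + 4).choose 3 + (N + 4).choose 4 :=
      Nat.choose_succ_succ' _ _
    have pascal₆ : (N + 6).choose 6 = (N + 5).choose 5 + (N + 5).choose 6 :=
      Nat.choose_succ_succ' _ _
    have hprev := card_five_inversions (N := N + 1) (by omega)
    rw [card_succ_succ (by omega)]
    simp only [add_assoc, Nat.reduceAdd] at *
    omega

end inversionTables

/-- For `n ≥ 6`, the number of tuples `(d_2,...,d_n)` of nonnegative integers with
`d_2 + ⋯ + d_n = 6` and `d_k ≤ k - 1` equals `C(n+4,6) - C(n+3,4) + n`. -/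
theorem stmt13 (n : ℕ) (hn : 6 ≤ n) :
    (((Fintype.piFinset (fun k : Fin (n - 1) => Finset.range ((k : ℕ) + 2))).filter
        (fun d => ∑ k, d k = 6)).card : ℤ) =
      ((n + 4).choose 6 : ℤ) - ((n + 3).choose 4 : ℤ) + (n : ℤ) := by
  obtain ⟨N, rfl⟩ : ∃ N, n = N + 1 := ⟨n - 1, by omega⟩
  have := inversionTables.card_six_inversions (N := N) (by omega)
  change (#(inversionTables N 6) : ℤ) = _
  simp only [add_assoc, Nat.reduceAdd]
  omega
end

section
/- Let λ be the two-row partition (n−k, k) with n−k ≥ k ≥ 1. Then for each 1 ≤ i ≤ k, the square-free monomial x_2 x_4 x_6 ⋯ x_{2i} belongs to the Garsia-Procesi basis B(λ), and it is the lexicographically minimal monomial of degree i in B(λ): for any other square-free monomial x_{i_1} x_{i_2} ⋯ x_{i_i} ∈ B(λ) with i_1 < i_2 < ⋯ < i_i, one has i_r ≥ 2r for each r. -/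
open MvPolynomial

/-!
For a two-row shape `(a, b)` with `a ≥ b`, the recursion either removes a box from the first
row (factor `1`) or from the second row (factor `x_{a+b}`, where `a + b ≥ 2b`). By induction,
every basis monomial is `x^d` with `∑_{x ≤ t} d x ≤ min(b, t / 2)` for every `t`; for a
square-free monomial `x_{i_1} ⋯ x_{i_i}` and `t = i_r` this reads `r ≤ i_r / 2`. The monomial
`x_2 x_4 ⋯ x_{2i}` is reached by shrinking the first row down to the square `(i, i)` and then
alternately removing a box from the second and from the first row.
-/

open Finset

theorem mem_gpAux_succ {n : ℕ} {l : List ℕ} {p : MvPolynomial ℕ ℚ} :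
    p ∈ gpAux (n + 1) l ↔ ∃ i < l.length, ∃ q ∈ gpAux n (gpStep l i), p = X (n + 1) ^ i * q := by
  simp only [gpAux, Set.mem_iUnion, Set.mem_image, Finset.mem_range, exists_prop, eq_comm]

theorem mem_gpAux_succ_pair {n a b : ℕ} {p : MvPolynomial ℕ ℚ} :
    p ∈ gpAux (n + 1) [a, b] ↔
      p ∈ gpAux n (gpStep [a, b] 0) ∨ ∃ q ∈ gpAux n (gpStep [a, b] 1), p = X (n + 1) * q := by
  simp [mem_gpAux_succ, Nat.le_one_iff_eq_zero_or_eq_one, or_and_right, exists_or]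

theorem gpAux_singleton (a : ℕ) : gpAux a [a] = {1} := by
  induction a with
  | zero => rfl
  | succ n ih =>
    have hstep : gpStep [n + 1] 0 = if n = 0 then [] else [n] := by
      split_ifs with h <;> simp [gpStep, h]
    ext p
    simp only [mem_gpAux_succ, List.length_singleton, Nat.lt_one_iff, exists_eq_left, pow_zero,
      one_mul, exists_eq_right', hstep]
    split_ifs with h
    · subst h; rfl
    · rw [ih]

-- `gpStep` drops empty rows, so the shape `(a, 0)` is the one-row list `[a]`.
def twoRow (a b : ℕ) : List ℕ := if b = 0 then [a] else [a, b]

theorem twoRow_of_pos {a b : ℕ} (hb : 0 < b) : twoRow a b = [a, b] := if_neg hb.ne'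

theorem gpBasis_twoRow (a b : ℕ) : gpBasis (twoRow a b) = gpAux (a + b) (twoRow a b) := by
  unfold twoRow; split_ifs with h <;> simp [gpBasis, h]

theorem gpStep_pair_zero_of_lt {a b : ℕ} (hb : 0 < b) (hba : b < a) :
    gpStep [a, b] 0 = twoRow (a - 1) b := by
  simp [gpStep, twoRow_of_pos hb, List.insertionSort,
    show a - 1 ≠ 0 by omega, hb.ne', show b ≤ a - 1 by omega]

theorem gpStep_pair_self_zero {a : ℕ} (ha : 0 < a) : gpStep [a, a] 0 = twoRow a (a - 1) := by
  unfold twoRow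
  split_ifs with h
  · simp [gpStep, show a = 1 by omega]
  · simp [gpStep, List.insertionSort, List.orderedInsert, h, ha.ne', show ¬ a ≤ a - 1 by omega]

theorem gpStep_pair_one {a b : ℕ} (hb : 0 < b) (hba : b ≤ a) :
    gpStep [a, b] 1 = twoRow a (b - 1) := by
  unfold twoRow
  split_ifs with h
  · simp [gpStep, show b = 1 by omega, show a ≠ 0 by omega]
  · simp [gpStep, List.insertionSort, h, show a ≠ 0 by omega, show b - 1 ≤ a by omega]

theorem prod_X_two_mul_mem_gpAux_twoRow {a b i : ℕ} (hba : b ≤ a) (hib : i ≤ b) :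
    ∏ r ∈ range i, (X (2 * (r + 1)) : MvPolynomial ℕ ℚ) ∈ gpAux (a + b) (twoRow a b) := by
  induction hm : a + b generalizing a b i with
  | zero =>
    obtain rfl : i = 0 := by omega
    simp [gpAux]
  | succ n ih =>
    rcases Nat.eq_zero_or_pos b with rfl | hb
    · obtain rfl : i = 0 := by omega
      rw [add_zero] at hm
      simp [twoRow, ← hm, gpAux_singleton]
    rw [twoRow_of_pos hb, mem_gpAux_succ_pair]
    rcases hba.lt_or_eq with hba | rfl
    · left
      rw [gpStep_pair_zero_of_lt hb hba]
      exact ih (by omega) hib (by omega)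
    rcases hib.lt_or_eq with hib | rfl
    · left
      rw [gpStep_pair_self_zero hb]
      exact ih (by omega) (by omega) (by omega)
    · right
      obtain ⟨j, rfl⟩ : ∃ j, i = j + 1 := ⟨i - 1, by omega⟩
      refine ⟨∏ r ∈ range j, X (2 * (r + 1)), ?_, ?_⟩
      · rw [gpStep_pair_one hb le_rfl]
        exact ih (by omega) le_rfl (by omega)
      · rw [prod_range_succ, mul_comm, show 2 * (j + 1) = n + 1 by omega]

def IsBallot (b : ℕ) (d : ℕ →₀ ℕ) : Prop :=
  ∀ t, ∑ x ∈ Iic t, d x ≤ b ∧ 2 * ∑ x ∈ Iic t, d x ≤ t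

theorem IsBallot.zero (b : ℕ) : IsBallot b 0 := fun t => by simp

theorem IsBallot.mono {b c : ℕ} {d : ℕ →₀ ℕ} (h : IsBallot b d) (hbc : b ≤ c) : IsBallot c d :=
  fun t => ⟨(h t).1.trans hbc, (h t).2⟩

theorem IsBallot.single_add {b m : ℕ} {d : ℕ →₀ ℕ} (h : IsBallot b d) (hm : 2 * (b + 1) ≤ m) :
    IsBallot (b + 1) (Finsupp.single m 1 + d) := by
  intro t
  have hsum : ∑ x ∈ Iic t, (Finsupp.single m 1 + d : ℕ →₀ ℕ) x =
      (if m ≤ t then 1 else 0) + ∑ x ∈ Iic t, d x := by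
    simp [sum_add_distrib, Finsupp.single_apply]
  have := h t
  rw [hsum]
  split_ifs <;> omega

theorem exists_isBallot_of_mem_gpAux_twoRow {a b : ℕ} (hba : b ≤ a) {p : MvPolynomial ℕ ℚ}
    (hp : p ∈ gpAux (a + b) (twoRow a b)) : ∃ d, IsBallot b d ∧ p = monomial d 1 := by
  obtain ⟨m, hm⟩ : ∃ m, a + b = m := ⟨_, rfl⟩
  rw [hm] at hp
  induction m generalizing a b p with
  | zero =>
    exact ⟨0, IsBallot.zero b, by simpa [gpAux] using hp⟩
  | succ n ih =>
    rcases Nat.eq_zero_or_pos b with rfl | hb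
    · rw [add_zero] at hm
      simp only [twoRow, if_true, ← hm, gpAux_singleton, Set.mem_singleton_iff] at hp
      exact ⟨0, IsBallot.zero 0, by simp [hp]⟩
    rw [twoRow_of_pos hb, mem_gpAux_succ_pair] at hp
    rcases hp with hp | ⟨q, hq, rfl⟩
    · rcases hba.lt_or_eq with hba | rfl
      · rw [gpStep_pair_zero_of_lt hb hba] at hp
        exact ih (by omega) hp (by omega)
      · rw [gpStep_pair_self_zero hb] at hp
        obtain ⟨d, hd, rfl⟩ := ih (by omega) hp (by omega)
        exact ⟨d, hd.mono (by omega), rfl⟩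
    · rw [gpStep_pair_one hb hba] at hq
      obtain ⟨d, hd, rfl⟩ := ih (by omega) hq (by omega)
      refine ⟨Finsupp.single (n + 1) 1 + d, ?_, by rw [monomial_single_add, pow_one]⟩
      simpa [Nat.sub_add_cancel hb] using hd.single_add (m := n + 1) (by omega)

theorem prod_X_eq_monomial {R σ ι : Type*} [CommSemiring R] (s : Finset ι) (c : ι → σ) :
    ∏ r ∈ s, (X (c r) : MvPolynomial σ R) = monomial (∑ r ∈ s, Finsupp.single (c r) 1) 1 :=
  (monomial_sum_one s _).symm

theorem StrictMono.sum_Iic_sum_single {i : ℕ} {c : Fin i → ℕ} (hc : StrictMono c) (r : Fin i) :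
    ∑ x ∈ Iic (c r), (∑ r', Finsupp.single (c r') 1 : ℕ →₀ ℕ) x = r + 1 := by
  simp only [Finsupp.finsetSum_apply, Finsupp.single_apply]
  rw [sum_comm]
  simp [hc.le_iff_le, filter_ge_eq_Iic]

theorem stmt15_general (n k : ℕ) (hk : 1 ≤ k) (htworow : k ≤ n - k) :
    ∀ i : ℕ, 1 ≤ i → i ≤ k →
      ((∏ r ∈ Finset.range i, (X (2 * (r + 1)) : MvPolynomial ℕ ℚ)) ∈ gpBasis [n - k, k]) ∧
      (∀ c : Fin i → ℕ, StrictMono c →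
        (∏ r : Fin i, (X (c r) : MvPolynomial ℕ ℚ)) ∈ gpBasis [n - k, k] →
        ∀ r : Fin i, 2 * ((r : ℕ) + 1) ≤ c r) := by
  intro i _ hik
  rw [← twoRow_of_pos hk, gpBasis_twoRow]
  refine ⟨prod_X_two_mul_mem_gpAux_twoRow htworow hik, fun c hc hmem r => ?_⟩
  obtain ⟨d, hd, hcd⟩ := exists_isBallot_of_mem_gpAux_twoRow htworow hmem
  rw [prod_X_eq_monomial, (monomial_left_injective one_ne_zero).eq_iff] at hcd
  have := (hd (c r)).2
  rwa [← hcd, hc.sum_Iic_sum_single] at this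

/-- For the two-row partition `λ = (n-k, k)` with `n-k ≥ k ≥ 1` and each `1 ≤ i ≤ k`:
the monomial `x_2 x_4 ⋯ x_{2i}` belongs to `B(λ)`, and any square-free monomial
`x_{i_1} ⋯ x_{i_i} ∈ B(λ)` with `i_1 < ⋯ < i_i` satisfies `i_r ≥ 2r` for each `r`. -/
theorem stmt15 (n k : ℕ) (hk : 1 ≤ k) (hkn : k ≤ n) (htworow : k ≤ n - k) :
    ∀ i : ℕ, 1 ≤ i → i ≤ k →
      ((∏ r ∈ Finset.range i, (X (2 * (r + 1)) : MvPolynomial ℕ ℚ)) ∈ gpBasis [n - k, k]) ∧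
      (∀ c : Fin i → ℕ, StrictMono c →
        (∏ r : Fin i, (X (c r) : MvPolynomial ℕ ℚ)) ∈ gpBasis [n - k, k] →
        ∀ r : Fin i, 2 * ((r : ℕ) + 1) ≤ c r) :=
  stmt15_general n k hk htworow
end
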